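/- arXiv:2512.17064 — 2 statements merged into one kernel-verified Lean document; each statement's English description precedes it below -/
import Mathlib

section
/- Let A be a CME generator matrix on a finite state set X (nonnegative off-diagonal entries, nonpositive diagonal entries, and zero column sums), let J be a nonempty proper subset of X, and let A_J be the principal submatrix of A on J. Let p(t) = e^{tA} p(0) be the solution of the full master equation for a probability vector p(0) supported on J, and let p_J(t) denote its restriction to J. Suppose that for some t_f ≥ 0 and ε > 0 the retained mass satisfies 1ᵀ e^{A_J t_f} p_J(0) ≥ 1 − ε. Then the elementwise bounds e^{A_J t_f} p_J(0) ≤ p_J(t_f) ≤ e^{A_J t_f} p_J(0) + ε·1 hold, where 1 is the all-ones vector on J. -/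
open Matrix BigOperators

namespace FSPaux

variable {n : Type*} [Fintype n] [DecidableEq n]

lemma exp_entry_hasSum (M : Matrix n n ℝ) (i j : n) :
    HasSum (fun k : ℕ => ((k.factorial : ℝ))⁻¹ * (M ^ k) i j) (NormedSpace.exp M i j) := by
  letI : SeminormedRing (Matrix n n ℝ) := Matrix.linftyOpSemiNormedRing
  letI : NormedRing (Matrix n n ℝ) := Matrix.linftyOpNormedRing
  letI : NormedAlgebra ℝ (Matrix n n ℝ) := Matrix.linftyOpNormedAlgebra
  have h := NormedSpace.exp_series_hasSum_exp' (𝕂 := ℝ) M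
  have h2 := Pi.hasSum.mp (Pi.hasSum.mp h i) j
  simp [Matrix.smul_apply, smul_eq_mul] at h2
  exact h2

lemma pow_entry_nonneg {M : Matrix n n ℝ} (hM : ∀ i j, 0 ≤ M i j) :
    ∀ (k : ℕ) (i j : n), 0 ≤ (M ^ k) i j := by
  intro k
  induction k with
  | zero =>
    intro i j
    simp only [pow_zero, Matrix.one_apply]
    split <;> norm_num
  | succ m ih =>
    intro i j
    rw [pow_succ, Matrix.mul_apply]
    exact Finset.sum_nonneg fun x _ => mul_nonneg (ih i x) (hM x j)

lemma exp_entry_nonneg {M : Matrix n n ℝ} (hM : ∀ i j, 0 ≤ M i j) (i j : n) :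
    0 ≤ NormedSpace.exp M i j := by
  rw [← (exp_entry_hasSum M i j).tsum_eq]
  exact tsum_nonneg fun k => mul_nonneg (by positivity) (pow_entry_nonneg hM k i j)

/-- exp of a shift by a scalar matrix. -/
lemma exp_shift (M : Matrix n n ℝ) (c : ℝ) :
    NormedSpace.exp M = Real.exp (-c) • NormedSpace.exp (M + c • 1) := by
  letI : SeminormedRing (Matrix n n ℝ) := Matrix.linftyOpSemiNormedRing
  letI : NormedRing (Matrix n n ℝ) := Matrix.linftyOpNormedRing
  letI : NormedAlgebra ℝ (Matrix n n ℝ) := Matrix.linftyOpNormedAlgebra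
  have h1 : M = (M + c • 1) + (-c) • 1 := by
    rw [neg_smul]; abel
  have hscal : NormedSpace.exp ((-c) • (1 : Matrix n n ℝ))
      = Real.exp (-c) • (1 : Matrix n n ℝ) := by
    have h2 : (-c) • (1 : Matrix n n ℝ) = algebraMap ℝ (Matrix n n ℝ) (-c) :=
      (Algebra.algebraMap_eq_smul_one _).symm
    rw [h2, ← Algebra.algebraMap_eq_smul_one, Real.exp_eq_exp_ℝ]
    exact (NormedSpace.algebraMap_exp_comm (𝔸 := Matrix n n ℝ) (-c)).symm
  calc NormedSpace.exp M
      = NormedSpace.exp ((M + c • 1) + (-c) • 1) := by rw [← h1]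
    _ = NormedSpace.exp (M + c • 1) * NormedSpace.exp ((-c) • (1 : Matrix n n ℝ)) :=
        Matrix.exp_add_of_commute _ _ ((Commute.one_right _).smul_right _)
    _ = Real.exp (-c) • NormedSpace.exp (M + c • 1) := by
        rw [hscal, Matrix.mul_smul, mul_one]

/-- Submatrix comparison for powers of entrywise-nonnegative matrices. -/
lemma pow_submatrix_le {M : Matrix n n ℝ} (hM : ∀ i j, 0 ≤ M i j)
    (J : Set n) [DecidablePred (· ∈ J)] :
    ∀ (k : ℕ) (i j : J),
      ((M.submatrix (Subtype.val : J → n) Subtype.val) ^ k) i j ≤ (M ^ k) i.val j.val := by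
  intro k
  induction k with
  | zero =>
    intro i j
    simp only [pow_zero, Matrix.one_apply, Subtype.ext_iff]
    rfl
  | succ m ih =>
    intro i j
    rw [pow_succ, pow_succ, Matrix.mul_apply, Matrix.mul_apply]
    have step1 : ∑ x : J,
        ((M.submatrix (Subtype.val : J → n) Subtype.val) ^ m) i x
          * (M.submatrix (Subtype.val : J → n) Subtype.val) x j
        ≤ ∑ x : J, (M ^ m) i.val x.val * M x.val j.val := by
      refine Finset.sum_le_sum fun x _ => ?_
      have h1 := ih i x
      have h2 : (M.submatrix (Subtype.val : J → n) Subtype.val) x j = M x.val j.val := rfl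
      rw [h2]
      refine mul_le_mul_of_nonneg_right h1 (hM _ _) |>.trans ?_
      exact le_of_eq rfl
    refine step1.trans ?_
    have step2 : ∑ x : J, (M ^ m) i.val x.val * M x.val j.val
        = ∑ y ∈ Finset.univ.map (Function.Embedding.subtype (· ∈ J)),
            (M ^ m) i.val y * M y j.val := by
      rw [Finset.sum_map]
      rfl
    rw [step2]
    exact Finset.sum_le_sum_of_subset_of_nonneg (Finset.subset_univ _)
      (fun y _ _ => mul_nonneg (pow_entry_nonneg hM m _ _) (hM _ _))

end FSPaux

namespace FSPaux

variable {n : Type*} [Fintype n] [DecidableEq n]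

/-- Submatrix comparison for the exponential of a Metzler matrix with nonpositive diagonal. -/
lemma exp_submatrix_le {B : Matrix n n ℝ} (hoffB : ∀ i j, i ≠ j → 0 ≤ B i j)
    (hdiagB : ∀ i, B i i ≤ 0) (J : Set n) [DecidablePred (· ∈ J)] (i j : J) :
    NormedSpace.exp (B.submatrix (Subtype.val : J → n) Subtype.val) i j
      ≤ NormedSpace.exp B i.val j.val := by
  set c : ℝ := ∑ x, -(B x x) with hc
  have hcle : ∀ x, -(B x x) ≤ c := fun x =>
    Finset.single_le_sum (fun y _ => neg_nonneg.mpr (hdiagB y)) (Finset.mem_univ x)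
  have hMnn : ∀ x y, 0 ≤ (B + c • 1) x y := by
    intro x y
    by_cases h : x = y
    · subst h
      simp only [Matrix.add_apply, Matrix.smul_apply, Matrix.one_apply_eq, smul_eq_mul, mul_one]
      linarith [hcle x]
    · simp only [Matrix.add_apply, Matrix.smul_apply, Matrix.one_apply_ne h, smul_eq_mul,
        mul_zero, add_zero]
      exact hoffB x y h
  have hsub : (B.submatrix (Subtype.val : J → n) (Subtype.val : J → n)) + c • 1
      = (B + c • 1).submatrix (Subtype.val : J → n) (Subtype.val : J → n) := by
    ext a b
    simp [Matrix.one_apply, Subtype.val_inj]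
  rw [exp_shift B c, exp_shift (B.submatrix (Subtype.val : J → n) Subtype.val) c, hsub]
  have hcmp : NormedSpace.exp ((B + c • 1).submatrix (Subtype.val : J → n) Subtype.val) i j
      ≤ NormedSpace.exp (B + c • 1) i.val j.val := by
    refine hasSum_le (fun k => ?_) (exp_entry_hasSum _ i j) (exp_entry_hasSum _ i.val j.val)
    exact mul_le_mul_of_nonneg_left (pow_submatrix_le hMnn J k i j) (by positivity)
  simpa [Matrix.smul_apply, smul_eq_mul] using
    mul_le_mul_of_nonneg_left hcmp (le_of_lt (Real.exp_pos (-c)))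

/-- Nonnegativity of the exponential of a Metzler matrix with nonpositive diagonal. -/
lemma exp_metzler_nonneg {B : Matrix n n ℝ} (hoffB : ∀ i j, i ≠ j → 0 ≤ B i j)
    (hdiagB : ∀ i, B i i ≤ 0) (i j : n) : 0 ≤ NormedSpace.exp B i j := by
  set c : ℝ := ∑ x, -(B x x) with hc
  have hcle : ∀ x, -(B x x) ≤ c := fun x =>
    Finset.single_le_sum (fun y _ => neg_nonneg.mpr (hdiagB y)) (Finset.mem_univ x)
  have hMnn : ∀ x y, 0 ≤ (B + c • 1) x y := by
    intro x y
    by_cases h : x = y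
    · subst h
      simp only [Matrix.add_apply, Matrix.smul_apply, Matrix.one_apply_eq, smul_eq_mul, mul_one]
      linarith [hcle x]
    · simp only [Matrix.add_apply, Matrix.smul_apply, Matrix.one_apply_ne h, smul_eq_mul,
        mul_zero, add_zero]
      exact hoffB x y h
  rw [exp_shift B c]
  simp only [Matrix.smul_apply, smul_eq_mul]
  exact mul_nonneg (Real.exp_pos _).le (exp_entry_nonneg hMnn i j)

/-- Column sums of powers vanish for positive powers of a zero-column-sum matrix. -/
lemma col_sum_pow {B : Matrix n n ℝ} (hcolB : ∀ j, ∑ i, B i j = 0) (k : ℕ) (hk : k ≠ 0)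
    (j : n) : ∑ i, (B ^ k) i j = 0 := by
  obtain ⟨m, rfl⟩ := Nat.exists_eq_succ_of_ne_zero hk
  rw [pow_succ']
  simp only [Matrix.mul_apply]
  rw [Finset.sum_comm]
  simp only [← Finset.sum_mul]
  simp [hcolB]

/-- Column sums of the exponential of a zero-column-sum matrix are 1. -/
lemma col_sum_exp {B : Matrix n n ℝ} (hcolB : ∀ j, ∑ i, B i j = 0) (j : n) :
    ∑ i, NormedSpace.exp B i j = 1 := by
  have h1 : ∀ i : n, NormedSpace.exp B i j
      = ∑' k : ℕ, ((k.factorial : ℝ))⁻¹ * (B ^ k) i j :=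
    fun i => (exp_entry_hasSum B i j).tsum_eq.symm
  calc ∑ i, NormedSpace.exp B i j
      = ∑ i, ∑' k : ℕ, ((k.factorial : ℝ))⁻¹ * (B ^ k) i j := by
        exact Finset.sum_congr rfl fun i _ => h1 i
    _ = ∑' k : ℕ, ∑ i, ((k.factorial : ℝ))⁻¹ * (B ^ k) i j :=
        (Summable.tsum_finsetSum fun i _ => (exp_entry_hasSum B i j).summable).symm
    _ = 1 := by
        rw [tsum_eq_single 0]
        · simp [Matrix.one_apply, Finset.sum_ite_eq']
        · intro k hk
          rw [← Finset.mul_sum, col_sum_pow hcolB k hk, mul_zero]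

end FSPaux

open FSPaux

/-- **Classical FSP bounds.** If `A` is a CME generator on a finite state set `X`,
`J` a nonempty proper subset with principal submatrix `A_J`, `p(t) = e^{tA} p(0)` the
full CME solution for a probability vector `p(0)` supported on `J`, and the retained mass
of the truncated solution at time `t_f ≥ 0` is at least `1 - ε`, then the truncated
solution bounds the restricted true solution elementwise from below and, up to `ε`,
from above. -/
theorem fsp_classical_bounds
    (X : Type) [Fintype X] [DecidableEq X]
    (A : Matrix X X ℝ)
    (hoff : ∀ i j, i ≠ j → 0 ≤ A i j)
    (hdiag : ∀ i, A i i ≤ 0)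
    (hcol : ∀ j, ∑ i, A i j = 0)
    (J : Set X) [DecidablePred (· ∈ J)]
    (hJne : J.Nonempty) (hJprop : J ≠ Set.univ)
    (p0 : X → ℝ)
    (hp0nn : ∀ x, 0 ≤ p0 x)
    (hp0sum : ∑ x, p0 x = 1)
    (hsupp : ∀ x ∉ J, p0 x = 0)
    (p : ℝ → X → ℝ)
    (hp : ∀ t, p t = (NormedSpace.exp (t • A)).mulVec p0)
    (tf ε : ℝ) (htf : 0 ≤ tf) (hε : 0 < ε)
    (hmass : 1 - ε ≤
      ∑ j : J, ((NormedSpace.exp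
          (tf • (A.submatrix (Subtype.val : J → X) Subtype.val))).mulVec
        (fun j : J => p0 j.val)) j) :
    ∀ j : J,
      ((NormedSpace.exp
          (tf • (A.submatrix (Subtype.val : J → X) Subtype.val))).mulVec
        (fun j : J => p0 j.val)) j ≤ p tf j.val ∧
      p tf j.val ≤
        ((NormedSpace.exp
            (tf • (A.submatrix (Subtype.val : J → X) Subtype.val))).mulVec
          (fun j : J => p0 j.val)) j + ε := by
  -- notation
  set B : Matrix X X ℝ := tf • A with hB
  have hoffB : ∀ i j, i ≠ j → 0 ≤ B i j := fun i j h => by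
    simp only [hB, Matrix.smul_apply, smul_eq_mul]
    exact mul_nonneg htf (hoff i j h)
  have hdiagB : ∀ i, B i i ≤ 0 := fun i => by
    simp only [hB, Matrix.smul_apply, smul_eq_mul]
    exact mul_nonpos_of_nonneg_of_nonpos htf (hdiag i)
  have hcolB : ∀ j, ∑ i, B i j = 0 := fun j => by
    simp only [hB, Matrix.smul_apply, smul_eq_mul, ← Finset.mul_sum, hcol j, mul_zero]
  have hBJ : tf • (A.submatrix (Subtype.val : J → X) (Subtype.val : J → X))
      = B.submatrix (Subtype.val : J → X) (Subtype.val : J → X) := rfl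
  set E : Matrix X X ℝ := NormedSpace.exp B with hE
  set EJ : Matrix J J ℝ :=
    NormedSpace.exp (tf • (A.submatrix (Subtype.val : J → X) Subtype.val)) with hEJ
  -- entrywise facts
  have hEnn : ∀ x y, 0 ≤ E x y := exp_metzler_nonneg hoffB hdiagB
  have hcolE : ∀ y, ∑ x, E x y = 1 := col_sum_exp hcolB
  have hcmp : ∀ i k : J, EJ i k ≤ E i.val k.val := by
    intro i k
    rw [hEJ, hBJ]
    exact exp_submatrix_le hoffB hdiagB J i k
  have hEJnn : ∀ i k : J, 0 ≤ EJ i k := by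
    intro i k
    rw [hEJ, hBJ]
    refine exp_metzler_nonneg (fun a b hab => ?_) (fun a => hdiagB a.val) i k
    exact hoffB a.val b.val (fun h => hab (Subtype.ext h))
  -- expand mulVec
  have hq : ∀ k : J, (EJ.mulVec (fun j : J => p0 j.val)) k = ∑ x : J, EJ k x * p0 x.val := by
    intro k
    simp [Matrix.mulVec, dotProduct]
  have hpt : ∀ x : X, p tf x = ∑ y : X, E x y * p0 y := by
    intro x
    rw [hp tf]
    simp [Matrix.mulVec, dotProduct, hE, hB]
  have hptnn : ∀ x, 0 ≤ p tf x := fun x => by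
    rw [hpt x]
    exact Finset.sum_nonneg fun y _ => mul_nonneg (hEnn x y) (hp0nn y)
  have hptsum : ∑ x, p tf x = 1 := by
    calc ∑ x, p tf x = ∑ x, ∑ y, E x y * p0 y := Finset.sum_congr rfl fun x _ => hpt x
      _ = ∑ y, (∑ x, E x y) * p0 y := by
          rw [Finset.sum_comm]
          simp [Finset.sum_mul]
      _ = ∑ y, p0 y := by simp [hcolE]
      _ = 1 := hp0sum
  -- lower bound
  have hlow : ∀ k : J, (EJ.mulVec (fun j : J => p0 j.val)) k ≤ p tf k.val := by
    intro k
    rw [hq k, hpt k.val]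
    have hres : ∑ y : X, E k.val y * p0 y
        = ∑ y ∈ Finset.univ.map (Function.Embedding.subtype (· ∈ J)), E k.val y * p0 y := by
      refine (Finset.sum_subset (Finset.subset_univ _) fun y _ hy => ?_).symm
      have : y ∉ J := by simpa using hy
      rw [hsupp y this, mul_zero]
    rw [hres, Finset.sum_map]
    exact Finset.sum_le_sum fun x _ =>
      mul_le_mul_of_nonneg_right (hcmp k x) (hp0nn x.val)
  -- sum over J of the true solution is at most 1
  have hsumJ : ∑ k : J, p tf k.val ≤ 1 := by
    have h1 : ∑ k : J, p tf k.val
        = ∑ y ∈ Finset.univ.map (Function.Embedding.subtype (· ∈ J)), p tf y := by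
      rw [Finset.sum_map]
      rfl
    rw [h1, ← hptsum]
    exact Finset.sum_le_sum_of_subset_of_nonneg (Finset.subset_univ _)
      fun y _ _ => hptnn y
  -- conclude
  intro j
  refine ⟨hlow j, ?_⟩
  have e1 : ∑ k : J, p tf k.val
      = p tf j.val + ∑ k ∈ Finset.univ.erase j, p tf k.val :=
    (Finset.add_sum_erase _ _ (Finset.mem_univ j)).symm
  have e2 : ∑ k : J, (EJ.mulVec (fun j : J => p0 j.val)) k
      = (EJ.mulVec (fun j : J => p0 j.val)) j
        + ∑ k ∈ Finset.univ.erase j, (EJ.mulVec (fun j : J => p0 j.val)) k :=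
    (Finset.add_sum_erase _ _ (Finset.mem_univ j)).symm
  have e3 : ∑ k ∈ Finset.univ.erase j, (EJ.mulVec (fun j : J => p0 j.val)) k
      ≤ ∑ k ∈ Finset.univ.erase j, p tf k.val :=
    Finset.sum_le_sum fun k _ => hlow k
  have hmass' : 1 - ε ≤ ∑ k : J, (EJ.mulVec (fun j : J => p0 j.val)) k := hmass
  linarith
end

section
/- Let A be a CME generator matrix on a finite state set X (nonnegative off-diagonal entries, nonpositive diagonal entries, and zero column sums), let J be a nonempty proper subset of X with principal submatrix A_J, and let p(t) = e^{tA} p(0) for an entrywise nonnegative initial vector p(0) supported on J. Then for every t ≥ 0 the truncated solution underestimates the true restricted solution elementwise: e^{A_J t} p_J(0) ≤ p_J(t). -/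
open Matrix BigOperators

section Aux

variable {Y Z : Type} [Fintype Y] [DecidableEq Y] [Fintype Z] [DecidableEq Z]

lemma pow_entry_nonneg (M : Matrix Y Y ℝ) (hM : ∀ i j, 0 ≤ M i j) :
    ∀ (n : ℕ) (i j : Y), 0 ≤ (M ^ n) i j := by
  intro n
  induction n with
  | zero =>
    intro i j
    rw [pow_zero]
    by_cases h : i = j <;> simp [Matrix.one_apply, h]
  | succ n ih =>
    intro i j
    rw [pow_succ, Matrix.mul_apply]
    exact Finset.sum_nonneg fun k _ => mul_nonneg (ih i k) (hM k j)

lemma pow_submatrix_le (M : Matrix Y Y ℝ) (hM : ∀ i j, 0 ≤ M i j)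
    (e : Z → Y) (he : Function.Injective e) :
    ∀ (n : ℕ) (z w : Z), ((M.submatrix e e) ^ n) z w ≤ (M ^ n) (e z) (e w) := by
  intro n
  induction n with
  | zero =>
    intro z w
    rw [pow_zero, pow_zero]
    by_cases h : z = w
    · simp [Matrix.one_apply, h]
    · simp [Matrix.one_apply_ne h, Matrix.one_apply_ne (fun hh => h (he hh))]
  | succ n ih =>
    intro z w
    rw [pow_succ, pow_succ, Matrix.mul_apply, Matrix.mul_apply]
    calc ∑ k, ((M.submatrix e e) ^ n) z k * (M.submatrix e e) k w
        ≤ ∑ k, (M ^ n) (e z) (e k) * M (e k) (e w) :=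
          Finset.sum_le_sum fun k _ =>
            mul_le_mul_of_nonneg_right (ih z k) (hM (e k) (e w))
      _ = ∑ y ∈ Finset.univ.map ⟨e, he⟩, (M ^ n) (e z) y * M y (e w) := by
          rw [Finset.sum_map]; rfl
      _ ≤ ∑ y, (M ^ n) (e z) y * M y (e w) :=
          Finset.sum_le_sum_of_subset_of_nonneg (Finset.subset_univ _)
            (fun y _ _ => mul_nonneg (pow_entry_nonneg M hM n _ _) (hM _ _))

lemma exp_entry_eq (M : Matrix Y Y ℝ) (i j : Y) :
    NormedSpace.exp M i j = ∑' n : ℕ, ((n.factorial : ℝ)⁻¹ * (M ^ n) i j) := by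
  letI : SeminormedRing (Matrix Y Y ℝ) := Matrix.linftyOpSemiNormedRing
  letI : NormedRing (Matrix Y Y ℝ) := Matrix.linftyOpNormedRing
  letI : NormedAlgebra ℝ (Matrix Y Y ℝ) := Matrix.linftyOpNormedAlgebra
  have hS : Summable fun n : ℕ => ((n.factorial : ℝ)⁻¹) • M ^ n :=
    NormedSpace.expSeries_summable' (𝕂 := ℝ) M
  have hexp : NormedSpace.exp M = ∑' n : ℕ, ((n.factorial : ℝ)⁻¹) • M ^ n := by
    rw [NormedSpace.exp_eq_tsum ℝ]
  rw [hexp]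
  let φ : Matrix Y Y ℝ →+ ℝ := AddMonoidHom.mk' (fun m => m i j) (fun a b => rfl)
  have hc : Continuous φ := (continuous_apply j).comp (continuous_apply i)
  have h := (hS.hasSum.map φ hc).tsum_eq
  exact h.symm

lemma exp_entry_summable (M : Matrix Y Y ℝ) (i j : Y) :
    Summable fun n : ℕ => ((n.factorial : ℝ)⁻¹ * (M ^ n) i j) := by
  letI : SeminormedRing (Matrix Y Y ℝ) := Matrix.linftyOpSemiNormedRing
  letI : NormedRing (Matrix Y Y ℝ) := Matrix.linftyOpNormedRing
  letI : NormedAlgebra ℝ (Matrix Y Y ℝ) := Matrix.linftyOpNormedAlgebra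
  have hS : Summable fun n : ℕ => ((n.factorial : ℝ)⁻¹) • M ^ n :=
    NormedSpace.expSeries_summable' (𝕂 := ℝ) M
  let φ : Matrix Y Y ℝ →+ ℝ := AddMonoidHom.mk' (fun m => m i j) (fun a b => rfl)
  have hc : Continuous φ := (continuous_apply j).comp (continuous_apply i)
  exact hS.map φ hc

lemma exp_entry_le (M : Matrix Y Y ℝ) (hM : ∀ i j, 0 ≤ M i j)
    (e : Z → Y) (he : Function.Injective e) (z w : Z) :
    NormedSpace.exp (M.submatrix e e) z w ≤ NormedSpace.exp M (e z) (e w) := by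
  rw [exp_entry_eq, exp_entry_eq]
  refine Summable.tsum_le_tsum (fun n => ?_) (exp_entry_summable _ _ _) (exp_entry_summable _ _ _)
  exact mul_le_mul_of_nonneg_left (pow_submatrix_le M hM e he n z w)
    (by positivity)

lemma exp_smul_shift (M : Matrix Y Y ℝ) (r : ℝ) :
    NormedSpace.exp (M + r • (1 : Matrix Y Y ℝ)) =
      Real.exp r • NormedSpace.exp M := by
  letI : SeminormedRing (Matrix Y Y ℝ) := Matrix.linftyOpSemiNormedRing
  letI : NormedRing (Matrix Y Y ℝ) := Matrix.linftyOpNormedRing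
  letI : NormedAlgebra ℝ (Matrix Y Y ℝ) := Matrix.linftyOpNormedAlgebra
  have hcomm : Commute M (r • (1 : Matrix Y Y ℝ)) :=
    (Commute.one_right M).smul_right r
  rw [Matrix.exp_add_of_commute _ _ hcomm]
  have h1 : (r • (1 : Matrix Y Y ℝ)) = algebraMap ℝ (Matrix Y Y ℝ) r := by
    rw [Algebra.algebraMap_eq_smul_one]
  rw [h1, show NormedSpace.exp (algebraMap ℝ (Matrix Y Y ℝ) r) =
      algebraMap ℝ (Matrix Y Y ℝ) (NormedSpace.exp r) from (NormedSpace.algebraMap_exp_comm r).symm, ← Real.exp_eq_exp_ℝ,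
    Algebra.algebraMap_eq_smul_one, mul_smul_comm, mul_one]

end Aux

/-- **Truncated solution is an elementwise lower bound.** For a CME generator `A`,
a nonempty proper subset `J` with principal submatrix `A_J`, and a nonnegative initial
vector supported on `J`, the truncated solution `e^{A_J t} p_J(0)` underestimates the
restriction to `J` of the full solution `p(t) = e^{tA} p(0)` elementwise, for all `t ≥ 0`. -/
theorem fsp_truncation_lower_bound
    (X : Type) [Fintype X] [DecidableEq X]
    (A : Matrix X X ℝ)
    (hoff : ∀ i j, i ≠ j → 0 ≤ A i j)
    (hdiag : ∀ i, A i i ≤ 0)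
    (hcol : ∀ j, ∑ i, A i j = 0)
    (J : Set X) [DecidablePred (· ∈ J)]
    (hJne : J.Nonempty) (hJprop : J ≠ Set.univ)
    (p0 : X → ℝ)
    (hp0nn : ∀ x, 0 ≤ p0 x)
    (hsupp : ∀ x ∉ J, p0 x = 0)
    (p : ℝ → X → ℝ)
    (hp : ∀ t, p t = (NormedSpace.exp (t • A)).mulVec p0) :
    ∀ t : ℝ, 0 ≤ t → ∀ j : J,
      ((NormedSpace.exp
          (t • (A.submatrix (Subtype.val : J → X) Subtype.val))).mulVec
        (fun j : J => p0 j.val)) j ≤ p t j.val := by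
  intro t ht j
  rw [hp t]
  set e : J → X := Subtype.val with he_def
  have he : Function.Injective e := Subtype.val_injective
  set B : Matrix J J ℝ := A.submatrix e e with hB_def
  -- the shift constant
  set c : ℝ := ∑ i, (-A i i) with hc_def
  have hcA : ∀ i, 0 ≤ A i i + c := by
    intro i
    have h1 : -A i i ≤ c :=
      Finset.single_le_sum (f := fun i => -A i i)
        (fun k _ => neg_nonneg.2 (hdiag k)) (Finset.mem_univ i)
    linarith
  -- shifted matrix
  set M : Matrix X X ℝ := A + c • (1 : Matrix X X ℝ) with hM_def
  have hMnn : ∀ i k, 0 ≤ M i k := by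
    intro i k
    by_cases h : i = k
    · subst h
      simp only [hM_def, Matrix.add_apply, Matrix.smul_apply, Matrix.one_apply_eq,
        smul_eq_mul, mul_one]
      exact hcA i
    · simp only [hM_def, Matrix.add_apply, Matrix.smul_apply, Matrix.one_apply_ne h,
        smul_eq_mul, mul_zero, add_zero]
      exact hoff i k h
  have htMnn : ∀ i k, 0 ≤ (t • M) i k := fun i k =>
    smul_nonneg ht (hMnn i k)
  -- submatrix of shifted matrix
  have hsubM : (t • M).submatrix e e = t • B + (t * c) • (1 : Matrix J J ℝ) := by
    ext z w
    by_cases h : z = w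
    · subst h
      simp only [hM_def, hB_def, Matrix.submatrix_apply, Matrix.smul_apply, Matrix.add_apply,
        Matrix.one_apply_eq, smul_eq_mul]
      ring
    · simp only [hM_def, hB_def, Matrix.submatrix_apply, Matrix.smul_apply, Matrix.add_apply,
        Matrix.one_apply_ne h, Matrix.one_apply_ne (fun hh => h (he hh)), smul_eq_mul]
      ring
  have hM_eq : t • M = t • A + (t * c) • (1 : Matrix X X ℝ) := by
    rw [hM_def, smul_add, smul_smul]
  -- entrywise comparison for exponentials of shifted matrices
  have hshift : ∀ z w : J,
      NormedSpace.exp (t • B) z w ≤ NormedSpace.exp (t • A) (e z) (e w) := by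
    intro z w
    have h1 := exp_entry_le (t • M) htMnn e he z w
    rw [hsubM, hM_eq, exp_smul_shift (t • B) (t * c), exp_smul_shift (t • A) (t * c)] at h1
    have h2 : Real.exp (t * c) * NormedSpace.exp (t • B) z w ≤
        Real.exp (t * c) * NormedSpace.exp (t • A) (e z) (e w) := by
      simpa [Matrix.smul_apply, smul_eq_mul] using h1
    exact le_of_mul_le_mul_left h2 (Real.exp_pos _)
  -- nonnegativity of entries of exp (t • A)
  have hexpAnn : ∀ i k, 0 ≤ NormedSpace.exp (t • A) i k := by
    intro i k
    have h1 : NormedSpace.exp (t • M) i k =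
        Real.exp (t * c) * NormedSpace.exp (t • A) i k := by
      rw [hM_eq, exp_smul_shift (t • A) (t * c)]
      simp [Matrix.smul_apply, smul_eq_mul]
    have h2 : 0 ≤ NormedSpace.exp (t • M) i k := by
      rw [exp_entry_eq]
      refine tsum_nonneg fun n => ?_
      exact mul_nonneg (by positivity) (pow_entry_nonneg _ htMnn n i k)
    nlinarith [Real.exp_pos (t * c), h1, h2]
  -- now the mulVec comparison
  simp only [Matrix.mulVec, dotProduct]
  calc ∑ k : J, NormedSpace.exp (t • B) j k * p0 k.val
      ≤ ∑ k : J, NormedSpace.exp (t • A) (e j) (e k) * p0 (e k) :=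
        Finset.sum_le_sum fun k _ =>
          mul_le_mul_of_nonneg_right (hshift j k) (hp0nn k.val)
    _ = ∑ y ∈ Finset.univ.map ⟨e, he⟩, NormedSpace.exp (t • A) (e j) y * p0 y := by
        rw [Finset.sum_map]; rfl
    _ ≤ ∑ y, NormedSpace.exp (t • A) (e j) y * p0 y := by
        refine Finset.sum_le_sum_of_subset_of_nonneg (Finset.subset_univ _)
          (fun y _ _ => mul_nonneg (hexpAnn _ _) (hp0nn y))
end
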